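/- Let X and Y be n×n matrices with 0 ≤ X ≤ Y entrywise, X1 ≤ b and Y1 ≤ b. Then Ĉ(X) ≤ Ĉ(Y) entrywise, and the minimal nonnegative solutions of the corresponding Riccati equations satisfy S_min(X) ≤ S_min(Y) entrywise. -/

import Mathlib

open MeasureTheory Matrix Filter

noncomputable section

/-- Entrywise Bochner integral over `(0,∞)` of a matrix-valued function. -/
def intP {n : ℕ} (f : ℝ → Matrix (Fin n) (Fin n) ℝ) : Matrix (Fin n) (Fin n) ℝ :=
  Matrix.of fun i j => ∫ x in Set.Ioi (0:ℝ), f x i j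

/-- Matrix exponential. -/
def mexp {n : ℕ} (A : Matrix (Fin n) (Fin n) ℝ) : Matrix (Fin n) (Fin n) ℝ :=
  NormedSpace.exp A

/-- `∫_0^x e^{Gs} ds` (entrywise). -/
def cumExp {n : ℕ} (G : Matrix (Fin n) (Fin n) ℝ) (x : ℝ) : Matrix (Fin n) (Fin n) ℝ :=
  Matrix.of fun i j => ∫ s in (0:ℝ)..x, mexp (s • G) i j

/-- Irreducibility of a square matrix: for all `i ≠ j` there is a path from `i` to `j`
along nonzero entries. -/
def MatIrr {m : Type*} (A : Matrix m m ℝ) : Prop :=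
  ∀ i j : m, i ≠ j → ∃ (r : ℕ) (p : ℕ → m), p 0 = i ∧ p r = j ∧
    ∀ k < r, A (p k) (p (k+1)) ≠ 0

/-- Spectral radius of a real matrix: supremum of the moduli of its complex eigenvalues. -/
def specRad {m : Type*} [Fintype m] [DecidableEq m] (A : Matrix m m ℝ) : ℝ :=
  sSup ((fun z : ℂ => ‖z‖) '' (spectrum ℂ (A.map (algebraMap ℝ ℂ))))

/-- `A` is an M-matrix: `A = s•I − B` with `B ≥ 0` entrywise and `ρ(B) ≤ s`. -/
def IsMMatrix {m : Type*} [Fintype m] [DecidableEq m] (A : Matrix m m ℝ) : Prop :=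
  ∃ (s : ℝ) (B : Matrix m m ℝ), (∀ i j, 0 ≤ B i j) ∧ specRad B ≤ s ∧
    A = s • (1 : Matrix m m ℝ) - B

/-- `A = M − N` is a regular splitting: `M` invertible, `M⁻¹ ≥ 0`, `N ≥ 0`. -/
def RegSplit {n : ℕ} (A M N : Matrix (Fin n) (Fin n) ℝ) : Prop :=
  A = M - N ∧ IsUnit M.det ∧ (∀ i j, 0 ≤ M⁻¹ i j) ∧ (∀ i j, 0 ≤ N i j)

/-- The complex characteristic roots (eigenvalues with algebraic multiplicity)
of a real matrix. -/
def cRoots {n : ℕ} (Y : Matrix (Fin n) (Fin n) ℝ) : Multiset ℂ :=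
  ((Y.map (algebraMap ℝ ℂ)).charpoly).roots

/-- substochastic matrix -/
def Substoch {n : ℕ} (W : Matrix (Fin n) (Fin n) ℝ) : Prop :=
  (∀ i j, 0 ≤ W i j) ∧ ∀ i, ∑ j, W i j ≤ 1

/-- stochastic matrix -/
def StochMat {n : ℕ} (W : Matrix (Fin n) (Fin n) ℝ) : Prop :=
  (∀ i j, 0 ≤ W i j) ∧ ∀ i, ∑ j, W i j = 1

/-- subgenerator -/
def IsSubGen {n : ℕ} (Y : Matrix (Fin n) (Fin n) ℝ) : Prop :=
  (∀ i j, i ≠ j → 0 ≤ Y i j) ∧ ∀ i, ∑ j, Y i j ≤ 0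

/-- generator -/
def IsGen {n : ℕ} (Y : Matrix (Fin n) (Fin n) ℝ) : Prop :=
  (∀ i j, i ≠ j → 0 ≤ Y i j) ∧ ∀ i, ∑ j, Y i j = 0

/-- The data of a Markov-modulated Lévy process: phase generator `Q`, Brownian
drifts `a` and volatilities `s` (denoted `σ` in the paper), Lévy densities `ν`,
phase-change jump densities `μ`, and `U0 = U(0)` (the atoms at 0 of the jump
distributions). -/
structure Dat (n : ℕ) where
  Q : Matrix (Fin n) (Fin n) ℝ
  a : Fin n → ℝ
  s : Fin n → ℝ
  ν : Fin n → ℝ → ℝ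
  μ : Fin n → Fin n → ℝ → ℝ
  U0 : Matrix (Fin n) (Fin n) ℝ

namespace Dat

variable {n : ℕ} (D : Dat n)

/-- The standing assumptions of the paper. -/
structure Good : Prop where
  hn : 1 ≤ n
  hQoff : ∀ i j, i ≠ j → 0 ≤ D.Q i j
  hQrow : ∀ i, ∑ j, D.Q i j = 0
  hQirr : MatIrr D.Q
  hs : ∀ i, 0 < D.s i
  hνc : ∀ i, ContinuousOn (D.ν i) (Set.Ioi 0)
  hν0 : ∀ i, ∀ x ∈ Set.Ioi (0:ℝ), 0 ≤ D.ν i x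
  hνi : ∀ i, IntegrableOn (D.ν i) (Set.Ioi 0)
  hU0d : ∀ i, D.U0 i i = 1
  hU0o : ∀ i j, i ≠ j → D.U0 i j ∈ Set.Icc (0:ℝ) 1
  hμc : ∀ i j, i ≠ j → ContinuousOn (D.μ i j) (Set.Ioi 0)
  hμ0 : ∀ i j, ∀ x ∈ Set.Ioi (0:ℝ), 0 ≤ D.μ i j x
  hμi : ∀ i j, i ≠ j → IntegrableOn (D.μ i j) (Set.Ioi 0)
  hμU : ∀ i j, i ≠ j → D.U0 i j + ∫ x in Set.Ioi (0:ℝ), D.μ i j x = 1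
  hμd : ∀ i x, D.μ i i x = 0

/-- `Δ_a`. -/
def Da : Matrix (Fin n) (Fin n) ℝ := Matrix.diagonal D.a

/-- `Δ_{σ²}`. -/
def Ds : Matrix (Fin n) (Fin n) ℝ := Matrix.diagonal fun i => (D.s i)^2

/-- `Δ_ν(x)`. -/
def Dν (x : ℝ) : Matrix (Fin n) (Fin n) ℝ := Matrix.diagonal fun i => D.ν i x

/-- `Q ∘ μ(x)` (Hadamard product). -/
def Qμ (x : ℝ) : Matrix (Fin n) (Fin n) ℝ := Matrix.of fun i j => D.Q i j * D.μ i j x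

/-- The matrix function `F`. -/
def F (Y : Matrix (Fin n) (Fin n) ℝ) : Matrix (Fin n) (Fin n) ℝ :=
  D.Da * Y + (1/2 : ℝ) • (D.Ds * (Y * Y))
    + intP (fun x => D.Dν x * (mexp (x • Y) - 1))
    + Matrix.hadamard D.Q D.U0
    + intP (fun x => D.Qμ x * mexp (x • Y))

/-- The drift `κ`, relative to the stationary vector `π` of `Q`. -/
def kappa (π : Fin n → ℝ) : ℝ :=
  ∑ i, π i * (D.a i + (∫ x in Set.Ioi (0:ℝ), x * D.ν i x)
    + ∑ j, D.Q i j * ∫ x in Set.Ioi (0:ℝ), x * D.μ i j x)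

/-- `π` is the (positive) stationary probability vector of `Q`. -/
def IsStat (π : Fin n → ℝ) : Prop :=
  (∀ i, 0 < π i) ∧ (∀ j, ∑ i, π i * D.Q i j = 0) ∧ ∑ i, π i = 1

/-- `H(τ, W)`. -/
def H (τ : ℝ) (W : Matrix (Fin n) (Fin n) ℝ) : Matrix (Fin n) (Fin n) ℝ :=
  intP (fun x => D.Dν x * (mexp ((τ⁻¹ * x) • (W - 1)) - 1))

/-- `K(τ, W)`. -/
def K (τ : ℝ) (W : Matrix (Fin n) (Fin n) ℝ) : Matrix (Fin n) (Fin n) ℝ :=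
  Matrix.hadamard D.Q D.U0 + intP (fun x => D.Qμ x * mexp ((τ⁻¹ * x) • (W - 1)))

/-- `B_1`. -/
def B1 : Matrix (Fin n) (Fin n) ℝ := D.Ds

/-- `B_0(τ)`. -/
def B0 (τ : ℝ) : Matrix (Fin n) (Fin n) ℝ := (2*τ) • D.Da - (2:ℝ) • D.Ds

/-- `B_{-1}(τ, W)`. -/
def Bm1 (τ : ℝ) (W : Matrix (Fin n) (Fin n) ℝ) : Matrix (Fin n) (Fin n) ℝ :=
  D.Ds - (2*τ) • D.Da + (2*τ^2) • (D.H τ W + D.K τ W)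

/-- Equation (QW): `B₁W² + B₀(τ)W + B₋₁(τ,W) = 0`. -/
def QW (τ : ℝ) (W : Matrix (Fin n) (Fin n) ℝ) : Prop :=
  D.B1 * (W * W) + D.B0 τ * W + D.Bm1 τ W = 0

/-- `B̃_{-1}(τ, W) = −B₀(τ)⁻¹ B₋₁(τ,W)`. -/
def Btm1 (τ : ℝ) (W : Matrix (Fin n) (Fin n) ℝ) : Matrix (Fin n) (Fin n) ℝ :=
  -(D.B0 τ)⁻¹ * D.Bm1 τ W

/-- `B̃_1(τ) = −B₀(τ)⁻¹ B₁`. -/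
def Bt1 (τ : ℝ) : Matrix (Fin n) (Fin n) ℝ := -(D.B0 τ)⁻¹ * D.B1

/-- `0 < τ < τ*`: `troot i` is the unique positive root `τ_i` of the quadratic
`σ_i² − 2τ a_i + 2τ²(q_ii − ∫_0^∞ ν_i)`, `τ` is positive, `τ < σ_i²/a_i` whenever
`a_i > 0`, and `τ < τ_i` for all `i`. -/
def TauOK (troot : Fin n → ℝ) (τ : ℝ) : Prop :=
  (∀ i, 0 < troot i ∧
      (D.s i)^2 - 2 * troot i * D.a i
        + 2 * (troot i)^2 * (D.Q i i - ∫ x in Set.Ioi (0:ℝ), D.ν i x) = 0 ∧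
      ∀ t > 0, (D.s i)^2 - 2 * t * D.a i
        + 2 * t^2 * (D.Q i i - ∫ x in Set.Ioi (0:ℝ), D.ν i x) = 0 → t = troot i) ∧
  0 < τ ∧ (∀ i, 0 < D.a i → τ < (D.s i)^2 / D.a i) ∧ (∀ i, τ < troot i)

/-- `ρ_i = ∫_0^∞ ν_i`. -/
def rho (i : Fin n) : ℝ := ∫ x in Set.Ioi (0:ℝ), D.ν i x

/-- `λ_i = ρ_i + |q_ii|`. -/
def lam (i : Fin n) : ℝ := D.rho i + |D.Q i i|

/-- `b_i`. -/
def b (i : Fin n) : ℝ := (Real.sqrt ((D.a i)^2 + 2 * D.lam i * (D.s i)^2) + D.a i) / (D.s i)^2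

/-- `c_i`. -/
def c (i : Fin n) : ℝ := D.b i - 2 * D.a i / (D.s i)^2

/-- `Ĉ(X)`. -/
def Chat (X : Matrix (Fin n) (Fin n) ℝ) : Matrix (Fin n) (Fin n) ℝ :=
  Matrix.hadamard (D.Q - Matrix.diagonal fun i => D.Q i i) D.U0
    + intP (fun x => D.Dν x * mexp (x • (X - Matrix.diagonal D.b)))
    + intP (fun x => D.Qμ x * mexp (x • (X - Matrix.diagonal D.b)))

/-- `NARE(W)`: the Riccati equation `S² − Δ_c S − S Δ_b + 2Δ_{σ²}⁻¹ Ĉ(W) = 0` in `S`. -/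
def NARE (W S : Matrix (Fin n) (Fin n) ℝ) : Prop :=
  S * S - Matrix.diagonal D.c * S - S * Matrix.diagonal D.b
    + (2:ℝ) • (Matrix.diagonal (fun i => ((D.s i)^2)⁻¹) * D.Chat W) = 0

/-- `S` is the minimal nonnegative solution of `NARE(W)`. -/
def MinSolNARE (W S : Matrix (Fin n) (Fin n) ℝ) : Prop :=
  (∀ i j, 0 ≤ S i j) ∧ D.NARE W S ∧
    ∀ T, (∀ i j, 0 ≤ T i j) → D.NARE W T → ∀ i j, S i j ≤ T i j

/-- `Λ` (relative to `G`). -/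
def Lam (G : Matrix (Fin n) (Fin n) ℝ) : Matrix (Fin n) (Fin n) ℝ :=
  intP (fun x => D.Dν x * cumExp G x) + intP (fun x => D.Qμ x * cumExp G x)

/-- `Θ = −2Δ_a − Δ_{σ²}G − 2Λ` (relative to `G`). -/
def Theta (G : Matrix (Fin n) (Fin n) ℝ) : Matrix (Fin n) (Fin n) ℝ :=
  (-2 : ℝ) • D.Da - D.Ds * G - (2:ℝ) • D.Lam G

/-- Integrability of the first moments `∫ x ν_i(x) dx`, `∫ x μ_ij(x) dx`. -/
def Moments : Prop :=
  (∀ i, IntegrableOn (fun x => x * D.ν i x) (Set.Ioi (0:ℝ))) ∧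
  (∀ i j, IntegrableOn (fun x => x * D.μ i j x) (Set.Ioi (0:ℝ)))

end Dat

/-!
Metzler matrices become nonnegative after adding `c • 1` for
large `c`, and `exp (A + c • 1) = Real.exp c • exp A`; so the exponential of a Metzler matrix
inherits from the power series of a nonnegative matrix that it is nonnegative, monotone in the
matrix, and substochastic when the row sums are nonpositive. The integrands of `Ĉ` therefore
grow with `X` and are dominated by integrable kernels, which gives `Ĉ(X) ≤ Ĉ(Y)`.

Then `S_min(Y)` is a supersolution of `NARE(X)`. For small `t > 0` the map
`S ↦ S + t R_X(S)`, where `R_X` is the Riccati residual, is monotone on nonnegative matrices and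
maps `[0, S_min(Y)]` into itself, so by Knaster–Tarski it has a fixed point there: a nonnegative
solution of `NARE(X)` below `S_min(Y)`, which bounds `S_min(X)` from above.
-/

lemma exists_fixedPt_of_monotoneOn_Icc {α : Type*} [ConditionallyCompleteLattice α]
    {f : α → α} {a b : α} (hab : a ≤ b) (hf : MonotoneOn f (Set.Icc a b)) (ha : a ≤ f a)
    (hb : f b ≤ b) : ∃ x ∈ Set.Icc a b, f x = x := by
  have : Fact (a ≤ b) := ⟨hab⟩
  have hmaps : ∀ x ∈ Set.Icc a b, f x ∈ Set.Icc a b := fun x hx =>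
    ⟨ha.trans (hf (Set.left_mem_Icc.2 hab) hx hx.1),
      (hf hx (Set.right_mem_Icc.2 hab) hx.2).trans hb⟩
  let g : Set.Icc a b →o Set.Icc a b :=
    ⟨fun x => ⟨f x, hmaps x x.2⟩, fun x y hxy => hf x.2 y.2 hxy⟩
  exact ⟨g.lfp, g.lfp.2, congrArg Subtype.val g.map_lfp⟩

namespace Matrix

variable {m : Type*}

def IsMetzler (A : Matrix m m ℝ) : Prop := ∀ i j, i ≠ j → 0 ≤ A i j

lemma IsMetzler.smul {A : Matrix m m ℝ} (hA : A.IsMetzler) {x : ℝ} (hx : 0 ≤ x) :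
    (x • A).IsMetzler :=
  fun i j hij => mul_nonneg hx (hA i j hij)

lemma IsMetzler.sub_diagonal [DecidableEq m] {A : Matrix m m ℝ} (hA : A.IsMetzler)
    (v : m → ℝ) : (A - diagonal v).IsMetzler :=
  fun i j hij => by simpa [diagonal_apply_ne _ hij] using hA i j hij

variable [Fintype m]

lemma mul_self_apply_mono {S T : Matrix m m ℝ} (hS : ∀ i j, 0 ≤ S i j)
    (hST : ∀ i j, S i j ≤ T i j) (i j : m) : (S * S) i j ≤ (T * T) i j :=
  Finset.sum_le_sum fun l _ =>
    mul_le_mul (hST i l) (hST l j) (hS l j) ((hS i l).trans (hST i l))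

variable [DecidableEq m]

section PowerSeries

attribute [local instance] Matrix.linftyOpNormedAddCommGroup Matrix.linftyOpNormedRing
  Matrix.linftyOpNormedAlgebra

lemma hasSum_exp_apply (A : Matrix m m ℝ) (i j : m) :
    HasSum (fun k : ℕ => (k.factorial : ℝ)⁻¹ * (A ^ k) i j) (NormedSpace.exp A i j) := by
  have h := Pi.hasSum.mp (Pi.hasSum.mp (NormedSpace.exp_series_hasSum_exp' (𝕂 := ℝ) A) i) j
  simp only [smul_apply, smul_eq_mul] at h
  exact h

lemma continuous_exp_smul_apply (A : Matrix m m ℝ) (i j : m) :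
    Continuous fun x : ℝ => NormedSpace.exp (x • A) i j := by
  fun_prop

end PowerSeries

lemma pow_apply_mono {A B : Matrix m m ℝ} (hA : ∀ i j, 0 ≤ A i j)
    (hAB : ∀ i j, A i j ≤ B i j) (k : ℕ) (i j : m) : (A ^ k) i j ≤ (B ^ k) i j := by
  induction k generalizing j with
  | zero => rfl
  | succ k ih =>
    rw [pow_succ, pow_succ]
    exact Finset.sum_le_sum fun l _ =>
      mul_le_mul (ih l) (hAB l j) (hA l j) ((pow_apply_nonneg hA k i l).trans (ih l))

lemma sum_pow_apply_le {A : Matrix m m ℝ} (hA : ∀ i j, 0 ≤ A i j) {r : ℝ} (hr : 0 ≤ r)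
    (hrow : ∀ i, ∑ j, A i j ≤ r) (k : ℕ) (i : m) : ∑ j, (A ^ k) i j ≤ r ^ k := by
  induction k generalizing i with
  | zero => simp [one_apply]
  | succ k ih =>
    calc ∑ j, (A ^ (k + 1)) i j = ∑ l, A i l * ∑ j, (A ^ k) l j := by
          simp only [pow_succ', mul_apply, Finset.mul_sum]
          exact Finset.sum_comm
      _ ≤ ∑ l, A i l * r ^ k :=
          Finset.sum_le_sum fun l _ => mul_le_mul_of_nonneg_left (ih l) (hA i l)
      _ ≤ r * r ^ k := by
          rw [← Finset.sum_mul]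
          exact mul_le_mul_of_nonneg_right (hrow i) (by positivity)
      _ = r ^ (k + 1) := (pow_succ' r k).symm

lemma exp_apply_nonneg_of_nonneg {A : Matrix m m ℝ} (hA : ∀ i j, 0 ≤ A i j) (i j : m) :
    0 ≤ NormedSpace.exp A i j :=
  (hasSum_exp_apply A i j).nonneg fun k => mul_nonneg (by positivity) (pow_apply_nonneg hA k i j)

lemma exp_apply_mono_of_nonneg {A B : Matrix m m ℝ} (hA : ∀ i j, 0 ≤ A i j)
    (hAB : ∀ i j, A i j ≤ B i j) (i j : m) : NormedSpace.exp A i j ≤ NormedSpace.exp B i j :=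
  hasSum_le (fun k => mul_le_mul_of_nonneg_left (pow_apply_mono hA hAB k i j) (by positivity))
    (hasSum_exp_apply A i j) (hasSum_exp_apply B i j)

lemma sum_exp_apply_le_of_nonneg {A : Matrix m m ℝ} (hA : ∀ i j, 0 ≤ A i j) {r : ℝ}
    (hr : 0 ≤ r) (hrow : ∀ i, ∑ j, A i j ≤ r) (i : m) :
    ∑ j, NormedSpace.exp A i j ≤ Real.exp r := by
  refine hasSum_le (fun k => ?_) (hasSum_sum fun j _ => hasSum_exp_apply A i j)
    (Real.exp_eq_exp_ℝ ▸ NormedSpace.exp_series_hasSum_exp' (𝕂 := ℝ) r)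
  rw [← Finset.mul_sum, smul_eq_mul]
  exact mul_le_mul_of_nonneg_left (sum_pow_apply_le hA hr hrow k i) (by positivity)

lemma exp_add_smul_one (A : Matrix m m ℝ) (c : ℝ) :
    NormedSpace.exp (A + c • 1) = Real.exp c • NormedSpace.exp A := by
  rw [Matrix.exp_add_of_commute _ _ ((Commute.one_right A).smul_right c), smul_one_eq_diagonal,
    exp_diagonal, Pi.exp_def, ← smul_eq_mul_diagonal, Real.exp_eq_exp_ℝ]

namespace IsMetzler

variable {A B : Matrix m m ℝ}

lemma exists_add_smul_one_nonneg (hA : A.IsMetzler) :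
    ∃ c : ℝ, 0 ≤ c ∧ ∀ i j, 0 ≤ (A + c • 1) i j := by
  obtain ⟨c, hc⟩ := (Set.finite_range fun i => -A i i).bddAbove
  refine ⟨max c 0, le_max_right c 0, fun i j => ?_⟩
  rcases eq_or_ne i j with rfl | hij
  · simp only [add_apply, smul_apply, one_apply_eq, smul_eq_mul, mul_one]
    linarith [hc ⟨i, rfl⟩, le_max_left c 0]
  · simpa [one_apply_ne hij] using hA i j hij

lemma exp_apply_nonneg (hA : A.IsMetzler) (i j : m) : 0 ≤ NormedSpace.exp A i j := by
  obtain ⟨c, -, hc⟩ := hA.exists_add_smul_one_nonneg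
  have := exp_apply_nonneg_of_nonneg hc i j
  rw [exp_add_smul_one, smul_apply, smul_eq_mul] at this
  exact nonneg_of_mul_nonneg_right this (Real.exp_pos c)

lemma exp_apply_mono (hA : A.IsMetzler) (hAB : ∀ i j, A i j ≤ B i j) (i j : m) :
    NormedSpace.exp A i j ≤ NormedSpace.exp B i j := by
  obtain ⟨c, -, hc⟩ := hA.exists_add_smul_one_nonneg
  have := exp_apply_mono_of_nonneg hc (B := B + c • 1) (fun i j => by simpa using hAB i j) i j
  simp only [exp_add_smul_one, smul_apply, smul_eq_mul] at this
  exact le_of_mul_le_mul_left this (Real.exp_pos c)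

lemma sum_exp_apply_le_one (hA : A.IsMetzler) (hrow : ∀ i, ∑ j, A i j ≤ 0) (i : m) :
    ∑ j, NormedSpace.exp A i j ≤ 1 := by
  obtain ⟨c, hc0, hc⟩ := hA.exists_add_smul_one_nonneg
  have hrow' : ∀ i, ∑ j, (A + c • 1) i j ≤ c := fun i => by
    simp [Finset.sum_add_distrib, one_apply, hrow i]
  have := sum_exp_apply_le_of_nonneg hc hc0 hrow' i
  simp only [exp_add_smul_one, smul_apply, smul_eq_mul, ← Finset.mul_sum] at this
  exact le_of_mul_le_mul_left (by simpa using this) (Real.exp_pos c)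

end IsMetzler

def riccati (c b : m → ℝ) (C S : Matrix m m ℝ) : Matrix m m ℝ :=
  S * S - diagonal c * S - S * diagonal b + C

lemma riccati_apply (c b : m → ℝ) (C S : Matrix m m ℝ) (i j : m) :
    riccati c b C S i j = (S * S) i j - (c i + b j) * S i j + C i j := by
  simp only [riccati, Matrix.add_apply, Matrix.sub_apply, diagonal_mul, mul_diagonal]
  ring

lemma exists_riccati_eq_zero_of_nonpos {c b : m → ℝ} {C S' : Matrix m m ℝ}
    (hC : ∀ i j, 0 ≤ C i j) (hS'0 : ∀ i j, 0 ≤ S' i j)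
    (hS' : ∀ i j, riccati c b C S' i j ≤ 0) :
    ∃ S : Matrix m m ℝ, (∀ i j, 0 ≤ S i j) ∧ (∀ i j, S i j ≤ S' i j) ∧ riccati c b C S = 0 := by
  obtain ⟨M, hM⟩ := (Set.finite_range fun p : m × m => c p.1 + b p.2).bddAbove
  set t : ℝ := (|M| + 1)⁻¹
  have ht : 0 < t := by positivity
  have htd : ∀ i j, t * (c i + b j) ≤ 1 := fun i j => by
    rw [inv_mul_le_iff₀ (by positivity), mul_one]
    linarith [hM ⟨(i, j), rfl⟩, le_abs_self M]
  -- `Matrix` carries no order: `φ` is treated as a self-map of `m → m → ℝ`, ordered entrywise.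
  let φ : Matrix m m ℝ → Matrix m m ℝ := fun S => S + t • riccati c b C S
  have hφ : ∀ S i j, φ S i j = (1 - t * (c i + b j)) * S i j + t * ((S * S) i j + C i j) := by
    intro S i j
    simp only [φ, Matrix.add_apply, Matrix.smul_apply, smul_eq_mul, riccati_apply]
    ring
  have hmono : MonotoneOn (α := m → m → ℝ) (β := m → m → ℝ) φ (Set.Icc 0 S') := by
    intro S hS T _ hST i j
    have := htd i j
    have := mul_self_apply_mono hS.1 hST i j
    calc φ S i j = _ := hφ S i j
      _ ≤ _ := by gcongr; exact hST i j
      _ = φ T i j := (hφ T i j).symm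
  have h0 : (0 : m → m → ℝ) ≤ φ 0 := fun i j => by
    rw [hφ]
    simp [mul_nonneg ht.le (hC i j)]
  have hS'φ : @LE.le (m → m → ℝ) _ (φ S') S' := fun i j => by
    have h := mul_nonpos_of_nonneg_of_nonpos ht.le (hS' i j)
    rw [riccati_apply] at h
    rw [hφ]
    linear_combination h
  obtain ⟨S, hS, hSφ⟩ := exists_fixedPt_of_monotoneOn_Icc (fun i j => hS'0 i j) hmono h0 hS'φ
  exact ⟨S, hS.1, hS.2, (smul_eq_zero.1 (add_eq_left.1 hSφ)).resolve_left ht.ne'⟩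

end Matrix
section SubGenerator

variable {n : ℕ} {M : Matrix (Fin n) (Fin n) ℝ}

lemma IsSubGen.smul (hM : IsSubGen M) {x : ℝ} (hx : 0 ≤ x) : IsSubGen (x • M) := by
  refine ⟨Matrix.IsMetzler.smul hM.1 hx, fun i => ?_⟩
  simpa [← Finset.mul_sum] using mul_nonpos_of_nonneg_of_nonpos hx (hM.2 i)

lemma IsSubGen.substoch_mexp (hM : IsSubGen M) : Substoch (mexp M) :=
  ⟨Matrix.IsMetzler.exp_apply_nonneg hM.1, Matrix.IsMetzler.sum_exp_apply_le_one hM.1 hM.2⟩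

lemma isSubGen_sub_diagonal (hM : M.IsMetzler) {v : Fin n → ℝ} (hMv : ∀ i, ∑ j, M i j ≤ v i) :
    IsSubGen (M - diagonal v) :=
  ⟨hM.sub_diagonal v, fun i => by simpa [Finset.sum_sub_distrib, diagonal_apply] using hMv i⟩

lemma Substoch.apply_le_one (hM : Substoch M) (i j : Fin n) : M i j ≤ 1 :=
  (Finset.single_le_sum (fun l _ => hM.1 i l) (Finset.mem_univ j)).trans (hM.2 i)

end SubGenerator

section IntegralOperator

variable {n : ℕ} {K E E' : ℝ → Matrix (Fin n) (Fin n) ℝ}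

lemma intP_mul_apply_nonneg (hK : ∀ x > 0, ∀ i j, 0 ≤ K x i j)
    (hE : ∀ x > 0, ∀ i j, 0 ≤ E x i j) (i j : Fin n) :
    0 ≤ intP (fun x => K x * E x) i j := by
  show 0 ≤ ∫ x in Set.Ioi 0, ∑ l, K x i l * E x l j
  exact setIntegral_nonneg measurableSet_Ioi fun x hx =>
    Finset.sum_nonneg fun l _ => mul_nonneg (hK x hx i l) (hE x hx l j)

lemma intP_mul_apply_mono (hK : ∀ x > 0, ∀ i j, 0 ≤ K x i j)
    (hKint : ∀ i j, IntegrableOn (fun x => K x i j) (Set.Ioi 0))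
    (hE : ∀ x > 0, ∀ i j, 0 ≤ E x i j) (hEE' : ∀ x > 0, ∀ i j, E x i j ≤ E' x i j)
    (hE'cont : ∀ i j, Continuous fun x => E' x i j) (hE'1 : ∀ x > 0, ∀ i j, E' x i j ≤ 1)
    (i j : Fin n) : intP (fun x => K x * E x) i j ≤ intP (fun x => K x * E' x) i j := by
  show ∫ x in Set.Ioi 0, ∑ l, K x i l * E x l j ≤ ∫ x in Set.Ioi 0, ∑ l, K x i l * E' x l j
  refine integral_mono_of_nonneg ?_ ?_ ?_
  · filter_upwards [ae_restrict_mem measurableSet_Ioi] with x hx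
    exact Finset.sum_nonneg fun l _ => mul_nonneg (hK x hx i l) (hE x hx l j)
  · refine integrable_finsetSum _ fun l _ => (hKint i l).mul_bdd (c := 1)
      (hE'cont l j).aestronglyMeasurable ?_
    filter_upwards [ae_restrict_mem measurableSet_Ioi] with x hx
    rw [Real.norm_eq_abs, abs_le]
    exact ⟨by linarith [hE x hx l j, hEE' x hx l j], hE'1 x hx l j⟩
  · filter_upwards [ae_restrict_mem measurableSet_Ioi] with x hx
    exact Finset.sum_le_sum fun l _ => mul_le_mul_of_nonneg_left (hEE' x hx l j) (hK x hx i l)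

end IntegralOperator

namespace Dat

variable {n : ℕ} {D : Dat n}

lemma nare_iff (W S : Matrix (Fin n) (Fin n) ℝ) :
    D.NARE W S ↔
      riccati D.c D.b ((2 : ℝ) • (diagonal (fun i => ((D.s i) ^ 2)⁻¹) * D.Chat W)) S = 0 :=
  Iff.rfl

namespace Good

variable (hD : D.Good)
include hD

lemma Dν_apply_nonneg {x : ℝ} (hx : 0 < x) (i j : Fin n) : 0 ≤ D.Dν x i j := by
  rcases eq_or_ne i j with rfl | hij
  · simpa [Dat.Dν] using hD.hν0 i x hx
  · simp [Dat.Dν, diagonal_apply_ne _ hij]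

lemma integrableOn_Dν_apply (i j : Fin n) :
    IntegrableOn (fun x => D.Dν x i j) (Set.Ioi 0) := by
  rcases eq_or_ne i j with rfl | hij
  · simpa [Dat.Dν] using hD.hνi i
  · simp [Dat.Dν, diagonal_apply_ne _ hij]

lemma Qμ_apply_nonneg {x : ℝ} (hx : 0 < x) (i j : Fin n) : 0 ≤ D.Qμ x i j := by
  rcases eq_or_ne i j with rfl | hij
  · simp [Dat.Qμ, hD.hμd]
  · exact mul_nonneg (hD.hQoff i j hij) (hD.hμ0 i j x hx)

lemma integrableOn_Qμ_apply (i j : Fin n) :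
    IntegrableOn (fun x => D.Qμ x i j) (Set.Ioi 0) := by
  rcases eq_or_ne i j with rfl | hij
  · simp [Dat.Qμ, hD.hμd]
  · exact (hD.hμi i j hij).const_mul (D.Q i j)

lemma chat_apply_nonneg {W : Matrix (Fin n) (Fin n) ℝ} (hW : W.IsMetzler) (i j : Fin n) :
    0 ≤ D.Chat W i j := by
  have hE : ∀ x > (0 : ℝ), ∀ i j, 0 ≤ mexp (x • (W - diagonal D.b)) i j := fun x hx =>
    ((hW.sub_diagonal D.b).smul hx.le).exp_apply_nonneg
  have hU : 0 ≤ hadamard (D.Q - diagonal fun i => D.Q i i) D.U0 i j := by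
    rcases eq_or_ne i j with rfl | hij
    · simp
    · simpa [diagonal_apply_ne _ hij] using mul_nonneg (hD.hQoff i j hij) (hD.hU0o i j hij).1
  simp only [Dat.Chat, Matrix.add_apply]
  have := intP_mul_apply_nonneg (fun x hx => hD.Dν_apply_nonneg hx) hE i j
  have := intP_mul_apply_nonneg (fun x hx => hD.Qμ_apply_nonneg hx) hE i j
  positivity

lemma chat_apply_mono {X Y : Matrix (Fin n) (Fin n) ℝ} (hX : X.IsMetzler)
    (hXY : ∀ i j, X i j ≤ Y i j) (hYb : ∀ i, ∑ j, Y i j ≤ D.b i) (i j : Fin n) :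
    D.Chat X i j ≤ D.Chat Y i j := by
  have hY : Y.IsMetzler := fun i j hij => (hX i j hij).trans (hXY i j)
  have hEX : ∀ x > (0 : ℝ), ∀ i j, 0 ≤ mexp (x • (X - diagonal D.b)) i j := fun x hx =>
    ((hX.sub_diagonal D.b).smul hx.le).exp_apply_nonneg
  have hEXY : ∀ x > (0 : ℝ), ∀ i j,
      mexp (x • (X - diagonal D.b)) i j ≤ mexp (x • (Y - diagonal D.b)) i j := fun x hx =>
    ((hX.sub_diagonal D.b).smul hx.le).exp_apply_mono fun i j => by
      simp only [Matrix.smul_apply, Matrix.sub_apply, smul_eq_mul]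
      gcongr
      exact hXY i j
  have hEY1 : ∀ x > (0 : ℝ), ∀ i j, mexp (x • (Y - diagonal D.b)) i j ≤ 1 := fun x hx =>
    ((isSubGen_sub_diagonal hY hYb).smul hx.le).substoch_mexp.apply_le_one
  have hEYcont := continuous_exp_smul_apply (Y - diagonal D.b)
  simp only [Dat.Chat, Matrix.add_apply]
  refine add_le_add (add_le_add le_rfl ?_) ?_
  · exact intP_mul_apply_mono (fun x hx => hD.Dν_apply_nonneg hx) hD.integrableOn_Dν_apply
      hEX hEXY hEYcont hEY1 i j
  · exact intP_mul_apply_mono (fun x hx => hD.Qμ_apply_nonneg hx) hD.integrableOn_Qμ_apply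
      hEX hEXY hEYcont hEY1 i j

end Good

end Dat

theorem stmt12_general {n : ℕ} (D : Dat n) (hD : D.Good) (X Y : Matrix (Fin n) (Fin n) ℝ)
    (hX0 : ∀ i j, 0 ≤ X i j) (hXY : ∀ i j, X i j ≤ Y i j)
    (hYb : ∀ i, ∑ j, Y i j ≤ D.b i)
    (SX SY : Matrix (Fin n) (Fin n) ℝ)
    (hSX : D.MinSolNARE X SX) (hSY : D.MinSolNARE Y SY) :
    (∀ i j, D.Chat X i j ≤ D.Chat Y i j) ∧ (∀ i j, SX i j ≤ SY i j) := by
  have hX : X.IsMetzler := fun i j _ => hX0 i j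
  have hChat := hD.chat_apply_mono hX hXY hYb
  set w : Fin n → ℝ := fun i => ((D.s i) ^ 2)⁻¹
  have hconst : ∀ W i j, ((2 : ℝ) • (diagonal w * D.Chat W)) i j = 2 * (w i * D.Chat W i j) :=
    fun W i j => by simp
  have hC0 : ∀ i j, 0 ≤ ((2 : ℝ) • (diagonal w * D.Chat X)) i j := fun i j => by
    rw [hconst]
    have := hD.chat_apply_nonneg hX i j
    positivity
  have hSYsuper : ∀ i j, riccati D.c D.b ((2 : ℝ) • (diagonal w * D.Chat X)) SY i j ≤ 0 :=
    fun i j => by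
      have h := congrFun₂ ((D.nare_iff Y SY).1 hSY.2.1) i j
      rw [riccati_apply, hconst, Matrix.zero_apply] at h
      rw [riccati_apply, hconst]
      have : w i * D.Chat X i j ≤ w i * D.Chat Y i j :=
        mul_le_mul_of_nonneg_left (hChat i j) (by positivity)
      linarith
  obtain ⟨S, hS0, hSSY, hS⟩ := exists_riccati_eq_zero_of_nonpos hC0 hSY.1 hSYsuper
  exact ⟨hChat, fun i j => (hSX.2.2 S hS0 ((D.nare_iff X S).2 hS) i j).trans (hSSY i j)⟩

/-- Lemma 10 of the paper: monotonicity of `Ĉ` and of the minimal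
nonnegative solutions of the Riccati equations. -/
theorem stmt12 {n : ℕ} (D : Dat n) (hD : D.Good) (X Y : Matrix (Fin n) (Fin n) ℝ)
    (hX0 : ∀ i j, 0 ≤ X i j) (hXY : ∀ i j, X i j ≤ Y i j)
    (hXb : ∀ i, ∑ j, X i j ≤ D.b i) (hYb : ∀ i, ∑ j, Y i j ≤ D.b i)
    (SX SY : Matrix (Fin n) (Fin n) ℝ)
    (hSX : D.MinSolNARE X SX) (hSY : D.MinSolNARE Y SY) :
    (∀ i j, D.Chat X i j ≤ D.Chat Y i j) ∧ (∀ i j, SX i j ≤ SY i j) :=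
  stmt12_general D hD X Y hX0 hXY hYb SX SY hSX hSY
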